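/- Let F be a field and let I be an associative (not necessarily unital) F-algebra such that [[x,y],z] = 0 for all x, y, z ∈ I (where [a,b] = ab − ba), and such that I is nil of bounded index: there exists s ≥ 1 with a^s = 0 for all a ∈ I. Then for every r ≥ 1, the algebra M_r(I) of r×r matrices with entries in I is nil of bounded index: there exists k ≥ 1 (depending only on s and r) such that T^k = 0 for every T ∈ M_r(I). -/

import Mathlib

/-- Powers in a (possibly non-unital) multiplicative structure: `nupow x n = x^(n+1)`. -/
def nupow {M : Type*} [Mul M] (x : M) : ℕ → M
  | 0 => x
  | n + 1 => nupow x n * x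




set_option linter.unusedSectionVars false

section Word

variable {R : Type*} [Ring R] {ι : Type*} [Fintype ι] [DecidableEq ι]

/-- commutator of letters -/
def cc (t : ι → R) (p : ι × ι) : R := t p.1 * t p.2 - t p.2 * t p.1

/-- inversion count w.r.t. letter `i`: pairs (non-i, later i) -/
def invc (i : ι) : List ι → ℕ
  | [] => 0
  | a :: l => (if a = i then 0 else l.count i) + invc i l

variable (t : ι → R)

lemma invc_zero_struct {i : ι} {l : List ι} (h : invc i l = 0) :
    ∃ l', l = List.replicate (l.count i) i ++ l' ∧ l'.count i = 0 := by
  induction l with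
  | nil => exact ⟨[], rfl, rfl⟩
  | cons a l ih =>
      simp only [invc] at h
      obtain ⟨h1, h2⟩ := Nat.add_eq_zero.mp h
      by_cases ha : a = i
      · subst ha
        obtain ⟨l', hl, h0⟩ := ih h2
        refine ⟨l', ?_, h0⟩
        have hcnt : (a :: l).count a = l.count a + 1 := by simp [List.count_cons]
        rw [hcnt, List.replicate_succ, List.cons_append, ← hl]
      · have hc : l.count i = 0 := by simpa [ha] using h1
        have hw : (a :: l).count i = 0 := by simp [List.count_cons, ha, hc]
        exact ⟨a :: l, by simp [hw], hw⟩

lemma invc_pos_struct {i : ι} {l : List ι} (h : invc i l ≠ 0) :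
    ∃ w₁ a w₂, a ≠ i ∧ l = w₁ ++ a :: i :: w₂ := by
  induction l with
  | nil => exact absurd rfl h
  | cons b l ih =>
      by_cases hbl : invc i l = 0
      · have hb : b ≠ i := by
          intro hbi; subst hbi; simp [invc, hbl] at h
        have hcnt : l.count i ≠ 0 := by
          intro h0; exact h (by simp [invc, hb, h0, hbl])
        obtain ⟨l', hl, -⟩ := invc_zero_struct hbl
        obtain ⟨n, hn⟩ : ∃ n, l.count i = n + 1 := ⟨l.count i - 1, by omega⟩
        refine ⟨[], b, List.replicate n i ++ l', hb, ?_⟩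
        rw [hl, hn, List.replicate_succ]
        simp
      · obtain ⟨w₁, a, w₂, ha, hl⟩ := ih hbl
        exact ⟨b :: w₁, a, w₂, ha, by simp [hl]⟩

lemma count_swap (j i a : ι) (w₁ w₂ : List ι) :
    (w₁ ++ i :: a :: w₂).count j = (w₁ ++ a :: i :: w₂).count j := by
  simp [List.count_append, List.count_cons]; omega

lemma invc_swap {i a : ι} (ha : a ≠ i) (w₁ w₂ : List ι) :
    invc i (w₁ ++ i :: a :: w₂) + 1 = invc i (w₁ ++ a :: i :: w₂) := by
  induction w₁ with
  | nil => simp [invc, ha, List.count_cons]; omega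
  | cons b w₁ ih =>
      simp only [List.cons_append, invc, List.append_eq]
      rw [count_swap]
      omega

lemma sum_count_eq_length (l : List ι) : ∑ i : ι, l.count i = l.length := by
  induction l with
  | nil => simp
  | cons a l ih => simp [List.count_cons, Finset.sum_add_distrib, ih]



section Comm
variable (hc : ∀ (p : ι × ι) (k : ι), Commute (cc t p) (t k))
include hc

lemma cc_comm_cc (p q : ι × ι) : Commute (cc t p) (cc t q) :=
  ((hc p q.1).mul_right (hc p q.2)).sub_right ((hc p q.2).mul_right (hc p q.1))

lemma cc_comm_wprod (p : ι × ι) (w : List ι) : Commute (cc t p) ((w.map t).prod) := by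
  refine Commute.list_prod_right _ _ ?_
  intro x hx
  obtain ⟨k, -, rfl⟩ := List.mem_map.1 hx
  exact hc p k

lemma cc_comm_cprod (p : ι × ι) (cs : List (ι × ι)) :
    Commute (cc t p) ((cs.map (cc t)).prod) := by
  refine Commute.list_prod_right _ _ ?_
  intro x hx
  obtain ⟨q, -, rfl⟩ := List.mem_map.1 hx
  exact cc_comm_cc t hc p q

lemma pairwise_comm_cprod (cs : List (ι × ι)) : List.Pairwise Commute (cs.map (cc t)) :=
  List.pairwise_map.mpr (List.pairwise_iff_forall_sublist.mpr (fun _ => cc_comm_cc t hc _ _))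

lemma swapE (cs : List (ι × ι)) (w₁ w₂ : List ι) (a i : ι) :
    ((cs.map (cc t)).prod) * (((w₁ ++ a :: i :: w₂).map t).prod)
      = ((cs.map (cc t)).prod) * (((w₁ ++ i :: a :: w₂).map t).prod)
        + (((((a,i) :: cs)).map (cc t)).prod) * (((w₁ ++ w₂).map t).prod) := by
  have hW₁ : Commute (cc t (a,i)) ((w₁.map t).prod) := cc_comm_wprod t hc _ _
  have hP : Commute (cc t (a,i)) ((cs.map (cc t)).prod) := cc_comm_cprod t hc _ _
  simp only [List.map_append, List.map_cons, List.prod_append, List.prod_cons]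
  have e1 : t a * t i = t i * t a + cc t (a,i) := by simp [cc]
  calc (cs.map (cc t)).prod * ((w₁.map t).prod * (t a * (t i * (w₂.map t).prod)))
      = (cs.map (cc t)).prod * ((w₁.map t).prod * ((t a * t i) * (w₂.map t).prod)) := by
        rw [mul_assoc]
    _ = (cs.map (cc t)).prod * ((w₁.map t).prod *
          ((t i * t a) * (w₂.map t).prod + cc t (a,i) * (w₂.map t).prod)) := by
        rw [e1, add_mul]
    _ = (cs.map (cc t)).prod * ((w₁.map t).prod * (t i * (t a * (w₂.map t).prod)))
        + (cs.map (cc t)).prod * ((w₁.map t).prod * (cc t (a,i) * (w₂.map t).prod)) := by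
        rw [mul_add, mul_add, mul_assoc]
    _ = (cs.map (cc t)).prod * ((w₁.map t).prod * (t i * (t a * (w₂.map t).prod)))
        + cc t (a,i) * (cs.map (cc t)).prod * ((w₁.map t).prod * (w₂.map t).prod) := by
        congr 1
        calc (cs.map (cc t)).prod * ((w₁.map t).prod * (cc t (a,i) * (w₂.map t).prod))
            = (cs.map (cc t)).prod * (cc t (a,i) * ((w₁.map t).prod * (w₂.map t).prod)) := by
              rw [← mul_assoc ((w₁.map t).prod), ← hW₁.eq, mul_assoc]
          _ = cc t (a,i) * (cs.map (cc t)).prod * ((w₁.map t).prod * (w₂.map t).prod) := by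
              rw [← mul_assoc ((cs.map (cc t)).prod), ← hP.eq]

lemma dup_prod_zero (hsq : ∀ p : ι × ι, cc t p * cc t p = 0)
    {cs : List (ι × ι)} (h : ¬ cs.Nodup) : ((cs.map (cc t)).prod) = 0 := by
  obtain ⟨p, hp⟩ := List.exists_duplicate_iff_not_nodup.mpr h
  obtain ⟨rest, hperm⟩ := (List.duplicate_iff_sublist.mp hp).exists_perm_append
  have := List.Perm.prod_eq' (hperm.map (cc t)) (pairwise_comm_cprod t hc cs)
  rw [this]
  simp only [List.map_append, List.map_cons, List.prod_append, List.prod_cons,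
    ← mul_assoc, hsq p, zero_mul]

end Comm
end Word

section Main
variable {R : Type*} [Ring R] {ι : Type*} [Fintype ι] [DecidableEq ι] (t : ι → R)

lemma sorted_zero (s : ℕ) (hnil : ∀ i, t i ^ (s+1) = 0) {i : ι} {w : List ι}
    (h0 : invc i w = 0) (h2 : s + 1 ≤ w.count i) (P : R) : P * (w.map t).prod = 0 := by
  obtain ⟨l', hl, -⟩ := invc_zero_struct h0
  have hpow : t i ^ (w.count i) = 0 := by
    calc t i ^ (w.count i) = t i ^ (s+1) * t i ^ (w.count i - (s+1)) := by
          rw [← pow_add]; congr 1; omega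
      _ = 0 := by rw [hnil i, zero_mul]
  have hprod : (w.map t).prod = 0 := by
    conv_lhs => rw [hl]
    rw [List.map_append, List.prod_append, List.map_replicate, List.prod_replicate,
      hpow, zero_mul]
  rw [hprod, mul_zero]

lemma word_zero (hc : ∀ (p : ι × ι) (k : ι), Commute (cc t p) (t k))
    (hsq : ∀ p : ι × ι, cc t p * cc t p = 0)
    (s : ℕ) (hnil : ∀ i, t i ^ (s+1) = 0) :
    ∀ w : List ι,
      Fintype.card ι * s + 2 * (Fintype.card ι * Fintype.card ι) + 1 ≤ w.length →
      (w.map t).prod = 0 := by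
  have main : ∀ L : ℕ, ∀ (cs : List (ι × ι)) (w : List ι), w.length = L →
      Fintype.card ι * s + 2 * (Fintype.card ι * Fintype.card ι) + 1
        ≤ 2 * cs.length + w.length →
      (cs.map (cc t)).prod * (w.map t).prod = 0 := by
    intro L
    induction L using Nat.strong_induction_on with
    | _ L IH =>
      intro cs w hlen hK
      by_cases hnd : cs.Nodup
      · have hcs : cs.length ≤ Fintype.card ι * Fintype.card ι := by
          have := hnd.length_le_card
          rwa [Fintype.card_prod] at this
        have hex : ∃ i : ι, s + 1 ≤ w.count i := by
          by_contra hno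
          push_neg at hno
          have hle : w.length ≤ Fintype.card ι * s := by
            rw [← sum_count_eq_length w]
            calc ∑ i, w.count i ≤ ∑ _i : ι, s :=
              Finset.sum_le_sum (fun i _ => by have := hno i; omega)
              _ = Fintype.card ι * s := by simp [mul_comm]
          omega
        obtain ⟨i, hi⟩ := hex
        have inner : ∀ (m : ℕ) (w' : List ι), w'.length = L → s + 1 ≤ w'.count i →
            invc i w' ≤ m → (cs.map (cc t)).prod * (w'.map t).prod = 0 := by
          intro m
          induction m with
          | zero =>
            intro w' h1 h2 h3
            exact sorted_zero t s hnil (Nat.le_zero.mp h3) h2 _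
          | succ m IHm =>
            intro w' h1 h2 h3
            by_cases h0 : invc i w' = 0
            · exact sorted_zero t s hnil h0 h2 _
            · obtain ⟨w₁, a, w₂, ha, rfl⟩ := invc_pos_struct h0
              rw [swapE t hc cs w₁ w₂ a i]
              have hlsw : (w₁ ++ i :: a :: w₂).length = L := by
                simp only [List.length_append, List.length_cons] at h1 ⊢; omega
              have hcsw : s + 1 ≤ (w₁ ++ i :: a :: w₂).count i := by
                rw [count_swap]; exact h2
              have hisw : invc i (w₁ ++ i :: a :: w₂) ≤ m := by
                have := invc_swap ha w₁ w₂; omega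
              have z1 := IHm (w₁ ++ i :: a :: w₂) hlsw hcsw hisw
              have hlt : (w₁ ++ w₂).length < L := by
                simp only [List.length_append, List.length_cons] at h1 ⊢; omega
              have z2 := IH (w₁ ++ w₂).length hlt ((a,i) :: cs) (w₁ ++ w₂) rfl (by
                simp only [List.length_append, List.length_cons] at h1 ⊢
                omega)
              rw [z1, z2, add_zero]
        exact inner (invc i w) w hlen hi le_rfl
      · rw [dup_prod_zero t hc hsq hnd, zero_mul]
  intro w hw
  have := main w.length [] w rfl (by simpa using hw)
  simpa using this

end Main

section MatrixPart
variable {R : Type*} [Ring R] {r : ℕ} (t : Fin r × Fin r → R)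

/-- words of length `n` in the letters `t` -/
def WS (n : ℕ) : Set R :=
  {x | ∃ w : List (Fin r × Fin r), w.length = n ∧ x = (w.map t).prod}

lemma mem_mul_letter {n : ℕ} {x : R} (hx : x ∈ AddSubgroup.closure (WS t n))
    (p : Fin r × Fin r) : x * t p ∈ AddSubgroup.closure (WS t (n+1)) := by
  induction hx using AddSubgroup.closure_induction with
  | mem y hy =>
      obtain ⟨w, hw, rfl⟩ := hy
      exact AddSubgroup.subset_closure ⟨w ++ [p], by simp [hw], by simp⟩
  | zero => rw [zero_mul]; exact zero_mem _
  | add a b _ _ ha hb => rw [add_mul]; exact add_mem ha hb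
  | neg a _ ha => rw [neg_mul]; exact neg_mem ha

lemma entry_pow_mem (T : Matrix (Fin r) (Fin r) R) (hT : ∀ i j, T i j = t (i,j)) :
    ∀ n (i j : Fin r), (T^(n+1)) i j ∈ AddSubgroup.closure (WS t (n+1)) := by
  intro n
  induction n with
  | zero =>
      intro i j
      rw [pow_one, hT]
      exact AddSubgroup.subset_closure ⟨[(i,j)], rfl, by simp⟩
  | succ n ih =>
      intro i j
      rw [pow_succ, Matrix.mul_apply]
      refine AddSubgroup.sum_mem _ (fun k _ => ?_)
      rw [hT]
      exact mem_mul_letter t (ih i k) (k,j)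

lemma matrix_pow_zero
    (hc : ∀ (p : (Fin r × Fin r) × (Fin r × Fin r)) (k : Fin r × Fin r),
      Commute (cc t p) (t k))
    (hsq : ∀ p : (Fin r × Fin r) × (Fin r × Fin r), cc t p * cc t p = 0)
    (s : ℕ) (hnil : ∀ i, t i ^ (s+1) = 0)
    (T : Matrix (Fin r) (Fin r) R) (hT : ∀ i j, T i j = t (i,j)) :
    T ^ (Fintype.card (Fin r × Fin r) * s
      + 2 * (Fintype.card (Fin r × Fin r) * Fintype.card (Fin r × Fin r)) + 1) = 0 := by
  set k₀ := Fintype.card (Fin r × Fin r) * s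
      + 2 * (Fintype.card (Fin r × Fin r) * Fintype.card (Fin r × Fin r)) with hk₀
  obtain ⟨n, hn⟩ : ∃ n, k₀ + 1 = n + 1 := ⟨k₀, rfl⟩
  ext i j
  have hmem := entry_pow_mem t T hT k₀ i j
  have hbot : AddSubgroup.closure (WS t (k₀+1)) ≤ ⊥ := by
    rw [AddSubgroup.closure_le]
    intro x hx
    obtain ⟨w, hw, rfl⟩ := hx
    have := word_zero t hc hsq s hnil w (by omega)
    simpa [AddSubgroup.mem_bot] using this
  have := hbot hmem
  rw [AddSubgroup.mem_bot] at this
  simpa using this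

end MatrixPart

lemma nupow_eq_pow {M : Type*} [Monoid M] (x : M) (n : ℕ) : nupow x n = x ^ (n+1) := by
  induction n with
  | zero => simp [nupow]
  | succ n ih => rw [nupow, ih, ← pow_succ]


/-- Let `I` be an associative (not necessarily unital) `F`-algebra satisfying
`[[x,y],z] = 0` which is nil of bounded index (`a^(s+1) = 0` for all `a ∈ I`). Then for
every `r ≥ 1` the matrix algebra `M_r(I)` is nil of bounded index: there is `k` (depending
only on `s` and `r`) with `T^(k+1) = 0` for all `T ∈ M_r(I)`. -/
theorem stmt_11 (F : Type*) [Field F] (I : Type*) [NonUnitalRing I]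
    [Module F I] [SMulCommClass F I I] [IsScalarTower F I I]
    (hLie : ∀ x y z : I, (x * y - y * x) * z - z * (x * y - y * x) = 0)
    (s : ℕ) (hnil : ∀ a : I, nupow a s = 0)
    (r : ℕ) (hr : 1 ≤ r) :
    ∃ k : ℕ, ∀ T : Matrix (Fin r) (Fin r) I, nupow T k = 0 := by
  classical
  have key_comm : ∀ u v x : I,
      ((u*v - v*u : I) : Unitization F I) * (x : Unitization F I)
        = (x : Unitization F I) * ((u*v - v*u : I) : Unitization F I) := by
    intro u v x
    have h := sub_eq_zero.mp (hLie u v x)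
    rw [← Unitization.inr_mul, ← Unitization.inr_mul, h]
  have key_sq : ∀ u v : I, (u*v - v*u) * (u*v - v*u) = 0 := by
    intro u v
    have h2 : (u*v-v*u)*v = v*(u*v-v*u) := sub_eq_zero.mp (hLie u v v)
    have h1 : (u*(v*u) - (v*u)*u) * v = v*(u*(v*u)-(v*u)*u) :=
      sub_eq_zero.mp (hLie u (v*u) v)
    have e : u*(v*u) - (v*u)*u = (u*v-v*u)*u := by noncomm_ring
    rw [e] at h1
    calc (u*v-v*u)*(u*v-v*u)
        = ((u*v-v*u)*u)*v - ((u*v-v*u)*v)*u := by noncomm_ring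
      _ = v*((u*v-v*u)*u) - (v*(u*v-v*u))*u := by rw [h1, h2]
      _ = 0 := by noncomm_ring
  have inr_nupow : ∀ (a : I) (n : ℕ),
      ((nupow a n : I) : Unitization F I) = (a : Unitization F I)^(n+1) := by
    intro a n
    induction n with
    | zero => simp [nupow]
    | succ n ih => rw [nupow, Unitization.inr_mul, ih, ← pow_succ]
  refine ⟨Fintype.card (Fin r × Fin r) * s
      + 2 * (Fintype.card (Fin r × Fin r) * Fintype.card (Fin r × Fin r)), ?_⟩
  intro T
  set t : Fin r × Fin r → Unitization F I := fun p => ((T p.1 p.2 : I) : Unitization F I)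
    with ht
  have hcc : ∀ p : (Fin r × Fin r) × (Fin r × Fin r),
      cc t p = ((T p.1.1 p.1.2 * T p.2.1 p.2.2
        - T p.2.1 p.2.2 * T p.1.1 p.1.2 : I) : Unitization F I) := by
    intro p
    simp only [cc, ht, Unitization.inr_sub, Unitization.inr_mul]
  have hc : ∀ (p : (Fin r × Fin r) × (Fin r × Fin r)) (k : Fin r × Fin r),
      Commute (cc t p) (t k) := by
    intro p k
    rw [hcc]
    exact key_comm _ _ _
  have hsq : ∀ p : (Fin r × Fin r) × (Fin r × Fin r), cc t p * cc t p = 0 := by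
    intro p
    rw [hcc, ← Unitization.inr_mul, key_sq, Unitization.inr_zero]
  have hnilR : ∀ p : Fin r × Fin r, t p ^ (s+1) = 0 := by
    intro p
    have h := inr_nupow (T p.1 p.2) s
    rw [hnil, Unitization.inr_zero] at h
    exact h.symm
  let f : I →+ Unitization F I := AddMonoidHom.mk' (fun x : I => (x : Unitization F I))
    (Unitization.inr_add F)
  have fmul : ∀ (A B : Matrix (Fin r) (Fin r) I),
      (A*B).map f = (A.map f) * (B.map f) := by
    intro A B
    refine Matrix.ext fun i j => ?_
    simp only [Matrix.map_apply, Matrix.mul_apply]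
    rw [map_sum f]
    refine Finset.sum_congr rfl fun k _ => ?_
    exact Unitization.inr_mul F _ _
  have hmapnupow : ∀ k, (nupow T k).map f = nupow (T.map f) k := by
    intro k
    induction k with
    | zero => rfl
    | succ k ih => simp only [nupow]; rw [fmul, ih]
  have hT' : ∀ i j, (T.map f) i j = t (i,j) := fun i j => rfl
  have hzero := matrix_pow_zero t hc hsq s hnilR (T.map f) hT'
  refine Matrix.ext fun i j => ?_
  apply Unitization.inr_injective (R := F)
  show ((nupow T _ i j : I) : Unitization F I) = ((0 : I) : Unitization F I)
  rw [Unitization.inr_zero]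
  calc ((nupow T _ i j : I) : Unitization F I)
      = ((nupow T _).map f) i j := rfl
    _ = (nupow (T.map f) _) i j := by rw [hmapnupow]
    _ = ((T.map f)^(Fintype.card (Fin r × Fin r) * s
        + 2 * (Fintype.card (Fin r × Fin r) * Fintype.card (Fin r × Fin r)) + 1)) i j := by
        rw [nupow_eq_pow]
    _ = 0 := by rw [hzero]; rfl
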